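/- Let T be a positive linear contraction on complex Lᵖ(X), 1 ≤ p < ∞ (positive on the real subspace, commuting with complex conjugation). If f ∈ Lᵖ_ℂ(X) satisfies ‖T f‖ = ‖f‖ and ‖T(|f|)‖ ≤ ‖|f|‖, then T(|f|) = |T f| almost everywhere. -/

import Mathlib

/-!
Positivity and conjugation-invariance give `Re (c • T f) = T (Re (c • f)) ≤ T |f|` for every
unimodular `c`; letting `c` run over a countable dense set of rotations yields `|T f| ≤ T |f|` a.e.
Then `‖T |f|‖ ≤ ‖|f|‖ = ‖f‖ = ‖T f‖`, and an a.e. inequality between functions whose `Lᵖ` norms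
compare the other way (with `p < ∞`) must be an a.e. equality.
-/

open MeasureTheory Filter Complex

theorem Complex.norm_le_of_forall_rat_re_exp_mul_le {z : ℂ} {c : ℝ}
    (h : ∀ q : ℚ, (exp ((q : ℝ) * I) * z).re ≤ c) : ‖z‖ ≤ c := by
  have hall : ∀ t : ℝ, (exp (t * I) * z).re ≤ c :=
    isClosed_property Rat.denseRange_cast (isClosed_le (by fun_prop) continuous_const) h
  have hrot : exp (↑(-arg z) * I) * z = ‖z‖ := by
    nth_rw 2 [← norm_mul_exp_arg_mul_I z]
    rw [mul_left_comm, ← exp_add, ofReal_neg, neg_mul, neg_add_cancel, exp_zero, mul_one]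
  simpa only [hrot, ofReal_re] using hall (-arg z)

theorem MeasureTheory.ae_norm_eq_of_ae_norm_le_of_eLpNorm_le {α E F : Type*}
    [MeasurableSpace α] {μ : Measure α} [NormedAddCommGroup E] [NormedAddCommGroup F]
    {p : ENNReal} {f : α → E} {g : α → F}
    (hp0 : p ≠ 0) (hp : p ≠ ⊤) (hf : eLpNorm f p μ ≠ ⊤) (hg : AEStronglyMeasurable g μ)
    (hle : ∀ᵐ x ∂μ, ‖f x‖ ≤ ‖g x‖) (hnorm : eLpNorm g p μ ≤ eLpNorm f p μ) :
    ∀ᵐ x ∂μ, ‖f x‖ = ‖g x‖ := by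
  have hpr : 0 < p.toReal := ENNReal.toReal_pos hp0 hp
  have hint : ∫⁻ x, ‖g x‖ₑ ^ p.toReal ∂μ ≤ ∫⁻ x, ‖f x‖ₑ ^ p.toReal ∂μ := by
    simp only [eLpNorm_eq_lintegral_rpow_enorm_toReal hp0 hp] at hnorm
    exact (ENNReal.rpow_le_rpow_iff (by positivity)).mp hnorm
  have hpow : (fun x => ‖f x‖ₑ ^ p.toReal) ≤ᵐ[μ] fun x => ‖g x‖ₑ ^ p.toReal := by
    filter_upwards [hle] with x hx
    gcongr
    exact enorm_le_iff_norm_le.mpr hx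
  have heq := ae_eq_of_ae_le_of_lintegral_le hpow
    (lintegral_rpow_enorm_lt_top_of_eLpNorm_lt_top hp0 hp hf.lt_top).ne
    (hg.enorm.pow_const _) hint
  filter_upwards [heq] with x hx
  exact enorm_eq_iff_norm_eq.mp (ENNReal.rpow_left_injective hpr.ne' hx)

namespace MeasureTheory.Lp

variable {α : Type*} [MeasurableSpace α] {μ : Measure α} {p : ENNReal}

theorem ae_norm_eq_of_ae_norm_le_of_norm_le [Fact (1 ≤ p)] {E F : Type*} [NormedAddCommGroup E]
    [NormedAddCommGroup F] (hp : p ≠ ⊤) {f : Lp E p μ} {g : Lp F p μ}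
    (hle : ∀ᵐ x ∂μ, ‖f x‖ ≤ ‖g x‖) (hnorm : ‖g‖ ≤ ‖f‖) : ∀ᵐ x ∂μ, ‖f x‖ = ‖g x‖ :=
  ae_norm_eq_of_ae_norm_le_of_eLpNorm_le (zero_lt_one.trans_le Fact.out).ne' hp
    (eLpNorm_ne_top f) (Lp.aestronglyMeasurable g) hle
    ((ENNReal.toReal_le_toReal (eLpNorm_ne_top g) (eLpNorm_ne_top f)).mp hnorm)

theorem coeFn_two_inv_smul_add_conj {g gc : Lp ℂ p μ}
    (hgc : ⇑gc =ᵐ[μ] fun x => starRingEnd ℂ (g x)) :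
    ⇑((2⁻¹ : ℂ) • (g + gc)) =ᵐ[μ] fun x => ((g x).re : ℂ) := by
  filter_upwards [coeFn_smul (2⁻¹ : ℂ) (g + gc), coeFn_add g gc, hgc] with x hsmul hadd hconj
  rw [hsmul, Pi.smul_apply, hadd, Pi.add_apply, hconj, re_eq_add_conj, smul_eq_mul]
  ring

theorem ae_re_apply_le_of_ae_re_le [Fact (1 ≤ p)] (T : Lp ℂ p μ →L[ℂ] Lp ℂ p μ)
    (hpos : ∀ g : Lp ℂ p μ, (∀ᵐ x ∂μ, (g x).im = 0 ∧ 0 ≤ (g x).re) →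
      ∀ᵐ x ∂μ, ((T g) x).im = 0 ∧ 0 ≤ ((T g) x).re)
    (hconj : ∀ g gc : Lp ℂ p μ, (⇑gc =ᵐ[μ] fun x => starRingEnd ℂ (g x)) →
      ⇑(T gc) =ᵐ[μ] fun x => starRingEnd ℂ ((T g) x))
    {g a : Lp ℂ p μ} (ha : ∀ᵐ x ∂μ, (a x).im = 0) (hle : ∀ᵐ x ∂μ, (g x).re ≤ (a x).re) :
    ∀ᵐ x ∂μ, ((T g) x).re ≤ ((T a) x).re := by
  -- `T` commutes with `Re = (id + conj) / 2`, so positivity applies to `a - Re g`.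
  set gc := (conjCLE.toContinuousLinearMap : ℂ →L[ℝ] ℂ).compLp g
  have hgc : ⇑gc =ᵐ[μ] fun x => starRingEnd ℂ (g x) :=
    ContinuousLinearMap.coeFn_compLp _ g
  set r := (2⁻¹ : ℂ) • (g + gc)
  have hr : ⇑r =ᵐ[μ] fun x => ((g x).re : ℂ) := coeFn_two_inv_smul_add_conj hgc
  have hTr : ⇑(T r) =ᵐ[μ] fun x => (((T g) x).re : ℂ) := by
    rw [map_smul, map_add]
    exact coeFn_two_inv_smul_add_conj (hconj g gc hgc)
  have hsub : ∀ᵐ x ∂μ, ((T (a - r)) x).im = 0 ∧ 0 ≤ ((T (a - r)) x).re := by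
    refine hpos _ ?_
    filter_upwards [coeFn_sub a r, ha, hle, hr] with x hsub ha hle hr
    rw [hsub, Pi.sub_apply, hr, sub_im, sub_re, ofReal_im, ofReal_re, ha]
    exact ⟨sub_zero 0, sub_nonneg.mpr hle⟩
  filter_upwards [hsub, coeFn_sub (T a) (T r), hTr] with x hpos hsub hTr
  rw [map_sub, hsub, Pi.sub_apply, hTr, sub_re, ofReal_re] at hpos
  exact sub_nonneg.mp hpos.2

theorem ae_norm_apply_le_re_apply_of_ae_eq_norm [Fact (1 ≤ p)] (T : Lp ℂ p μ →L[ℂ] Lp ℂ p μ)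
    (hpos : ∀ g : Lp ℂ p μ, (∀ᵐ x ∂μ, (g x).im = 0 ∧ 0 ≤ (g x).re) →
      ∀ᵐ x ∂μ, ((T g) x).im = 0 ∧ 0 ≤ ((T g) x).re)
    (hconj : ∀ g gc : Lp ℂ p μ, (⇑gc =ᵐ[μ] fun x => starRingEnd ℂ (g x)) →
      ⇑(T gc) =ᵐ[μ] fun x => starRingEnd ℂ ((T g) x))
    {f af : Lp ℂ p μ} (haf : ⇑af =ᵐ[μ] fun x => (‖f x‖ : ℂ)) :
    ∀ᵐ x ∂μ, ‖(T f) x‖ ≤ ((T af) x).re := by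
  have hrot : ∀ q : ℚ, ∀ᵐ x ∂μ, (exp ((q : ℝ) * I) * (T f) x).re ≤ ((T af) x).re := by
    intro q
    have hle := ae_re_apply_le_of_ae_re_le T hpos hconj (g := exp ((q : ℝ) * I) • f)
      (by filter_upwards [haf] with x hx; rw [hx, ofReal_im])
      (by
        filter_upwards [coeFn_smul (exp ((q : ℝ) * I)) f, haf] with x hsmul hx
        rw [hsmul, Pi.smul_apply, smul_eq_mul, hx, ofReal_re]
        exact (re_le_norm _).trans (by rw [norm_mul, norm_exp_ofReal_mul_I, one_mul]))
    filter_upwards [hle, coeFn_smul (exp ((q : ℝ) * I)) (T f)] with x hle hsmul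
    rwa [map_smul, hsmul, Pi.smul_apply, smul_eq_mul] at hle
  filter_upwards [ae_all_iff.mpr hrot] with x hx
  exact norm_le_of_forall_rat_re_exp_mul_le hx

end MeasureTheory.Lp

theorem T_abs_eq_abs_T
    {X : Type*} [MeasurableSpace X] (μ : Measure X)
    (p : ENNReal) [Fact (1 ≤ p)] (hp : p ≠ ⊤)
    (T : Lp ℂ p μ →L[ℂ] Lp ℂ p μ)
    (hpos : ∀ g : Lp ℂ p μ, (∀ᵐ x ∂μ, (g x).im = 0 ∧ 0 ≤ (g x).re) →
      ∀ᵐ x ∂μ, ((T g) x).im = 0 ∧ 0 ≤ ((T g) x).re)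
    (hconj : ∀ g gc : Lp ℂ p μ, (⇑gc =ᵐ[μ] fun x => starRingEnd ℂ (g x)) →
      ⇑(T gc) =ᵐ[μ] fun x => starRingEnd ℂ ((T g) x))
    (f af : Lp ℂ p μ)
    (haf : ⇑af =ᵐ[μ] fun x => (‖f x‖ : ℂ))
    (hf : ‖T f‖ = ‖f‖) (hTaf : ‖T af‖ ≤ ‖af‖) :
    ⇑(T af) =ᵐ[μ] fun x => (‖(T f) x‖ : ℂ) := by
  have hTaf_nonneg := hpos af (by filter_upwards [haf] with x hx; simp [hx])
  have hle : ∀ᵐ x ∂μ, ‖(T f) x‖ ≤ ‖(T af) x‖ := by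
    filter_upwards [Lp.ae_norm_apply_le_re_apply_of_ae_eq_norm T hpos hconj haf] with x hx
    exact hx.trans (re_le_norm _)
  have haf_norm : ∀ᵐ x ∂μ, ‖af x‖ = ‖f x‖ := by
    filter_upwards [haf] with x hx
    rw [hx, norm_real, norm_norm]
  have hnorm_af : ‖af‖ = ‖f‖ :=
    le_antisymm (Lp.norm_le_norm_of_ae_le (haf_norm.mono fun _ ↦ le_of_eq))
      (Lp.norm_le_norm_of_ae_le (haf_norm.mono fun _ ↦ ge_of_eq))
  have heq := Lp.ae_norm_eq_of_ae_norm_le_of_norm_le hp hle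
    (hTaf.trans_eq (hnorm_af.trans hf.symm))
  filter_upwards [hTaf_nonneg, heq] with x ⟨him, hre⟩ heq
  rw [heq, ← abs_re_eq_norm.mpr him, abs_of_nonneg hre]
  exact Complex.ext rfl (by rw [him, ofReal_im])
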